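/- Let r, F, D ∈ ℝ³ with D ≠ 0, and let δ ∈ ℝ³ be arbitrary. Then ⟨r × F + D × δ, D⟩ = ⟨r × F, D⟩, and consequently ‖r × F + D × δ‖ ≥ |⟨r × F, D⟩| / ‖D‖. -/

import Mathlib

open RealInnerProductSpace

/-- Cross product on `EuclideanSpace ℝ (Fin 3)`. -/
noncomputable def cross3 (a b : EuclideanSpace ℝ (Fin 3)) : EuclideanSpace ℝ (Fin 3) :=
  (WithLp.equiv 2 (Fin 3 → ℝ)).symm
    ![a 1 * b 2 - a 2 * b 1, a 2 * b 0 - a 0 * b 2, a 0 * b 1 - a 1 * b 0]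

theorem inner_cross3_self_left (a b : EuclideanSpace ℝ (Fin 3)) : ⟪cross3 a b, a⟫ = 0 := by
  simp only [cross3, EuclideanSpace.inner_eq_star_dotProduct]
  simp [dotProduct, Fin.sum_univ_three]
  ring

theorem abs_real_inner_div_norm_le_norm {E : Type*} [NormedAddCommGroup E]
    [InnerProductSpace ℝ E] (x y : E) : |⟪x, y⟫| / ‖y‖ ≤ ‖x‖ :=
  div_le_of_le_mul₀ (norm_nonneg y) (norm_nonneg x) (abs_real_inner_le_norm x y)

theorem stmt11_general (r F D δ : EuclideanSpace ℝ (Fin 3)) :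
    ⟪cross3 r F + cross3 D δ, D⟫ = ⟪cross3 r F, D⟫ ∧
    |⟪cross3 r F, D⟫| / ‖D‖ ≤ ‖cross3 r F + cross3 D δ‖ := by
  have h_axial : ⟪cross3 r F + cross3 D δ, D⟫ = ⟪cross3 r F, D⟫ := by
    rw [inner_add_left, inner_cross3_self_left, add_zero]
  exact ⟨h_axial, h_axial ▸ abs_real_inner_div_norm_le_norm _ D⟩

theorem stmt11 (r F D δ : EuclideanSpace ℝ (Fin 3)) (hD : D ≠ 0) :
    ⟪cross3 r F + cross3 D δ, D⟫ = ⟪cross3 r F, D⟫ ∧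
    |⟪cross3 r F, D⟫| / ‖D‖ ≤ ‖cross3 r F + cross3 D δ‖ :=
  stmt11_general r F D δ
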